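/- Let G be a class 2 simple graph with maximum degree Δ, rs₁∈E(G), φ∈C^Δ(G−rs₁), and F_φ(r,s₁:s_p) a multifan with respect to rs₁ and φ. Let δ∈φ̄(s_i) and λ∈φ̄(s_j) for distinct i,j∈[1,p]. If δ and λ are induced by the same color from φ̄(s₁), with δ≺λ, and s_i and s_j are (δ,λ)-unlinked with respect to φ, then r lies on the (δ,λ)-path P_{s_j}(δ,λ,φ) with endvertex s_j. -/

import Mathlib

open SimpleGraph

variable {V : Type*}

/-- A proper edge coloring of `G` with colors in `[1, k]`. -/
structure EdgeColoring (G : SimpleGraph V) (k : ℕ) where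
  color : Sym2 V → ℕ
  mem_Icc : ∀ e ∈ G.edgeSet, color e ∈ Set.Icc 1 k
  proper : ∀ u v w : V, G.Adj u v → G.Adj u w → v ≠ w → color s(u, v) ≠ color s(u, w)

namespace EdgeColoring

/-- The set of colors of `[1, k]` missing at `v`. -/
def missing {G : SimpleGraph V} {k : ℕ} (φ : EdgeColoring G k) (v : V) : Set ℕ :=
  {c | c ∈ Set.Icc 1 k ∧ ∀ u, G.Adj v u → φ.color s(v, u) ≠ c}

end EdgeColoring

/-- A vertex set `X` is `φ`-elementary if the missing-color sets of its vertices are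
pairwise disjoint. -/
def Elementary {G : SimpleGraph V} {k : ℕ} (φ : EdgeColoring G k) (X : Set V) : Prop :=
  ∀ x ∈ X, ∀ y ∈ X, x ≠ y → φ.missing x ∩ φ.missing y = ∅

/-- The spanning subgraph consisting of the edges colored `a` or `b`; its connected
components are the `(a, b)`-chains. -/
def chainGraph {G : SimpleGraph V} {k : ℕ} (φ : EdgeColoring G k) (a b : ℕ) :
    SimpleGraph V where
  Adj u v := G.Adj u v ∧ (φ.color s(u, v) = a ∨ φ.color s(u, v) = b)
  symm := ⟨fun u v h => ⟨h.1.symm, by rw [Sym2.eq_swap]; exact h.2⟩⟩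
  loopless := ⟨fun v h => G.loopless.irrefl v h.1⟩

section
variable [Fintype V] [DecidableEq V]

/-- `G` is class 2: there is no proper edge coloring with `Δ = maxDegree` colors. -/
def Class2 (G : SimpleGraph V) [DecidableRel G.Adj] : Prop :=
  IsEmpty (EdgeColoring G G.maxDegree)

/-- `G` is a Hilton–Zhao graph: connected, class 2, and every vertex of maximum degree has
at most two neighbors of maximum degree (`Δ(G_Δ) ≤ 2`). -/
def IsHZ (G : SimpleGraph V) [DecidableRel G.Adj] : Prop :=
  G.Connected ∧ Class2 G ∧
    ∀ v, G.degree v = G.maxDegree →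
      ((G.neighborFinset v).filter fun w => G.degree w = G.maxDegree).card ≤ 2

/-- `s 1, …, s (Δ - 2)` is a labeling (without repetition) of all the `(Δ-1)`-neighbors
of `r`. -/
def NbrLabeling (G : SimpleGraph V) [DecidableRel G.Adj] (r : V) (s : ℕ → V) : Prop :=
  Set.InjOn s (Set.Icc 1 (G.maxDegree - 2)) ∧
  (∀ i ∈ Set.Icc 1 (G.maxDegree - 2), G.Adj r (s i) ∧ G.degree (s i) = G.maxDegree - 1) ∧
  ∀ w, G.Adj r w → G.degree w = G.maxDegree - 1 →
    ∃ i ∈ Set.Icc 1 (G.maxDegree - 2), w = s i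

end

/-- `(r, r(s 1), s 1, r(s 2), s 2, …, r(s p), s p)` is a multifan centered at `r` with
respect to the edge `r(s 1)` and the coloring `φ` (a coloring of `G` minus that edge). -/
def IsMultifanAt {k : ℕ} {H : SimpleGraph V} (φ : EdgeColoring H k)
    (G : SimpleGraph V) (r : V) (s : ℕ → V) (p : ℕ) : Prop :=
  1 ≤ p ∧
  (∀ i ∈ Set.Icc 1 p, G.Adj r (s i) ∧ s i ≠ r) ∧
  Set.InjOn s (Set.Icc 1 p) ∧
  ∀ i ∈ Set.Icc 2 p, ∃ j ∈ Set.Icc 1 (i - 1), φ.color s(r, s i) ∈ φ.missing (s j)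

section
variable [Fintype V] [DecidableEq V]

/-- A multifan in an HZ-graph: additionally, all vertices except the center have degree
`Δ - 1`. -/
def IsHZMultifan {k : ℕ} {H : SimpleGraph V} (φ : EdgeColoring H k)
    (G : SimpleGraph V) [DecidableRel G.Adj] (r : V) (t : ℕ → V) (p : ℕ) : Prop :=
  IsMultifanAt φ G r t p ∧ ∀ i ∈ Set.Icc 1 p, G.degree (t i) = G.maxDegree - 1

/-- The multifan on `r, s 1, …, s p` is maximum at `r`: its number of vertices is maximum
among all multifans with respect to `rs` and `φ'` over all neighbors `s` of `r` and all
colorings `φ' ∈ C^Δ(G - rs)`. -/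
def IsMaximumMultifan (G : SimpleGraph V) [DecidableRel G.Adj] (r : V) (s : ℕ → V) (p : ℕ)
    (φ : EdgeColoring (G.deleteEdges {s(r, s 1)}) G.maxDegree) : Prop :=
  IsHZMultifan φ G r s p ∧
  ∀ (t : ℕ → V) (q : ℕ) (φ' : EdgeColoring (G.deleteEdges {s(r, t 1)}) G.maxDegree),
    IsHZMultifan φ' G r t q → q ≤ p

end

/-- `φ'` is `(F, φ)`-stable for the multifan on `r, s 1, …, s p`: the missing sets at all
vertices of the fan agree, as do the colors of all (colored) edges of the fan. -/
def MultifanStable {k : ℕ} {H : SimpleGraph V} (φ φ' : EdgeColoring H k)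
    (r : V) (s : ℕ → V) (p : ℕ) : Prop :=
  φ'.missing r = φ.missing r ∧
  (∀ i ∈ Set.Icc 1 p, φ'.missing (s i) = φ.missing (s i)) ∧
  ∀ i ∈ Set.Icc 2 p, φ'.color s(r, s i) = φ.color s(r, s i)

section
variable [Fintype V] [DecidableEq V]

/-- `S_φ(r, s 1 : s t : s (Δ - 2))` is a pseudo-multifan: the initial segment up to `s t`
is a maximum multifan, and the whole vertex set is `φ'`-elementary for every
`(F, φ)`-stable coloring `φ'`. -/
def IsPseudoMultifan (G : SimpleGraph V) [DecidableRel G.Adj] (r : V) (s : ℕ → V) (t : ℕ)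
    (φ : EdgeColoring (G.deleteEdges {s(r, s 1)}) G.maxDegree) : Prop :=
  1 ≤ t ∧ t ≤ G.maxDegree - 2 ∧
  IsMaximumMultifan G r s t φ ∧
  ∀ φ' : EdgeColoring (G.deleteEdges {s(r, s 1)}) G.maxDegree,
    MultifanStable φ φ' r s t →
    Elementary φ' ({r} ∪ s '' Set.Icc 1 (G.maxDegree - 2))

/-- The list `l` of vertices forms a rotation with respect to `φ`: distinct
`(Δ-1)`-neighbors of `r`, φ-elementary, and the edge from `r` to each vertex of the list
is colored with the unique missing color of the previous vertex (cyclically). -/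
def IsRotation (G : SimpleGraph V) [DecidableRel G.Adj] {k : ℕ} {H : SimpleGraph V}
    (φ : EdgeColoring H k) (r : V) (l : List V) : Prop :=
  l ≠ [] ∧ l.Nodup ∧
  (∀ v ∈ l, G.Adj r v ∧ G.degree v = G.maxDegree - 1) ∧
  Elementary φ {v | v ∈ l} ∧
  ∀ i : Fin l.length,
    φ.missing (l.get i) =
      {φ.color s(r, l.get ⟨(↑i + 1) % l.length, Nat.mod_lt _ i.pos⟩)}

/-- A typical multifan `F_φ(r, s 1 : s α : s β)`. -/
def IsTypicalMultifan (G : SimpleGraph V) [DecidableRel G.Adj] (r : V) (s : ℕ → V)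
    (α β : ℕ) (φ : EdgeColoring (G.deleteEdges {s(r, s 1)}) G.maxDegree) : Prop :=
  1 ≤ α ∧ α ≤ β ∧ β ≤ G.maxDegree - 2 ∧
  IsMultifanAt φ G r s β ∧
  (∀ i ∈ Set.Icc 1 β, G.degree (s i) = G.maxDegree - 1) ∧
  φ.missing r = {1} ∧
  φ.missing (s 1) = {2, G.maxDegree} ∧
  (∀ i ∈ Set.Icc 2 β, i ≠ α + 1 → φ.color s(r, s i) = i ∧ φ.missing (s i) = {i + 1}) ∧
  (α < β → φ.color s(r, s (α + 1)) = G.maxDegree ∧ φ.missing (s (α + 1)) = {α + 2})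

/-- `L = (F, ru, u, ux, x)` is a lollipop centered at `r` (on top of the typical multifan
with vertices `r, s 1, …, s β`): `u` is a `Δ`-neighbor of `r` and `x` is a
`(Δ-1)`-neighbor of `u` not among `s 1, …, s β`. -/
def IsLollipop (G : SimpleGraph V) [DecidableRel G.Adj] (r : V) (s : ℕ → V) (β : ℕ)
    (u x : V) : Prop :=
  G.Adj r u ∧ G.degree u = G.maxDegree ∧
  G.Adj u x ∧ G.degree x = G.maxDegree - 1 ∧
  x ≠ r ∧ ∀ i ∈ Set.Icc 1 β, x ≠ s i

end

/-- For a typical multifan `F_φ(r, s 1 : s α : s β)` in an HZ-graph with maximum degree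
`Δ`, the `Δ`-inducing colors are `Δ` together with `α + 2, …, β + 1`. -/
def IsDeltaInducingColor (Δ α β c : ℕ) : Prop :=
  c = Δ ∨ c ∈ Set.Icc (α + 2) (β + 1)

/-- For a typical multifan `F_φ(r, s 1 : s α : s β)`, the 2-inducing colors are
`2, 3, …, α + 1`. -/
def Is2InducingColor (α c : ℕ) : Prop :=
  c ∈ Set.Icc 2 (α + 1)

/-- `φ'` is `(L, φ)`-stable for the lollipop `L = (F, ru, u, ux, x)`. -/
def LollipopStable {k : ℕ} {H : SimpleGraph V} (φ φ' : EdgeColoring H k)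
    (r : V) (s : ℕ → V) (β : ℕ) (u x : V) : Prop :=
  MultifanStable φ φ' r s β ∧
  φ'.missing u = φ.missing u ∧ φ'.missing x = φ.missing x ∧
  φ'.color s(r, u) = φ.color s(r, u) ∧ φ'.color s(u, x) = φ.color s(u, x)

/-- `φ'` is obtained from `φ` by a single Kempe change on the `(a, b)`-chain containing
the vertex `z`: colors `a` and `b` are interchanged on that chain and all other edges
keep their colors. -/
def KempeChangeAt {k : ℕ} {H : SimpleGraph V} (φ φ' : EdgeColoring H k) (a b : ℕ)
    (z : V) : Prop :=
  (∀ u v : V, H.Adj u v →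
    ((chainGraph φ a b).Reachable z u ∨ (chainGraph φ a b).Reachable z v) →
    φ'.color s(u, v) =
      if φ.color s(u, v) = a then b
      else if φ.color s(u, v) = b then a
      else φ.color s(u, v)) ∧
  (∀ u v : V, H.Adj u v →
    ¬(chainGraph φ a b).Reachable z u → ¬(chainGraph φ a b).Reachable z v →
    φ'.color s(u, v) = φ.color s(u, v))

/-- `v` is an endvertex of the `(a, b)`-chain (in the chain graph `C`) containing `z`:
it belongs to that chain and has at most one neighbor on it. -/
def IsChainEnd (C : SimpleGraph V) (z v : V) : Prop :=
  C.Reachable z v ∧ ∀ w₁ w₂ : V, C.Adj v w₁ → C.Adj v w₂ → w₁ = w₂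

/-- `l` is the index list of an `a`-inducing sequence `s_{ℓ 1}, …, s_{ℓ h}` of the
multifan on `r, s 1, …, s p`. -/
def IsInducingSeq {k : ℕ} {H : SimpleGraph V} (φ : EdgeColoring H k) (r : V) (s : ℕ → V)
    (p a : ℕ) (l : List ℕ) : Prop :=
  (∀ i ∈ l, i ∈ Set.Icc 2 p) ∧
  l.Chain' (· < ·) ∧
  (∀ h : l ≠ [], φ.color s(r, s (l.head h)) = a) ∧
  l.Chain' (fun i j => φ.color s(r, s j) ∈ φ.missing (s i))

/-- The color `c` is induced by `a` (an `a`-inducing color): either `c = a` or `c` is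
missing at a vertex of some `a`-inducing sequence. -/
def InducedBy {k : ℕ} {H : SimpleGraph V} (φ : EdgeColoring H k) (r : V) (s : ℕ → V)
    (p a c : ℕ) : Prop :=
  c = a ∨ ∃ l, IsInducingSeq φ r s p a l ∧ ∃ i ∈ l, c ∈ φ.missing (s i)

/-- The order `δ ≺ lam` on `a`-inducing colors. -/
def ColorPrec {k : ℕ} {H : SimpleGraph V} (φ : EdgeColoring H k) (r : V) (s : ℕ → V)
    (p a δ lam : ℕ) : Prop :=
  (δ = a ∧ ∃ l, IsInducingSeq φ r s p a l ∧ ∃ i ∈ l, lam ∈ φ.missing (s i)) ∨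
  ∃ l, IsInducingSeq φ r s p a l ∧ ∃ i j : Fin l.length, i < j ∧
    δ ∈ φ.missing (s (l.get i)) ∧ lam ∈ φ.missing (s (l.get j))

/-! ### Auxiliary machinery for statement_9 -/

theorem EdgeColoring.mem_missing_iff {G : SimpleGraph V} {k : ℕ} (φ : EdgeColoring G k)
    {v : V} {c : ℕ} :
    c ∈ φ.missing v ↔ c ∈ Set.Icc 1 k ∧ ∀ u, G.Adj v u → φ.color s(v, u) ≠ c := Iff.rfl

theorem chainGraph_adj {H : SimpleGraph V} {k : ℕ} (φ : EdgeColoring H k) (α β : ℕ) {u v : V} :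
    (chainGraph φ α β).Adj u v ↔
      H.Adj u v ∧ (φ.color s(u, v) = α ∨ φ.color s(u, v) = β) := Iff.rfl

/-- Swap two colors. -/
def swapColor (α β c : ℕ) : ℕ := if c = α then β else if c = β then α else c

theorem swapColor_swapColor (α β c : ℕ) : swapColor α β (swapColor α β c) = c := by
  unfold swapColor; split_ifs <;> omega

theorem swapColor_mem_Icc {k α β : ℕ} (hα : α ∈ Set.Icc 1 k) (hβ : β ∈ Set.Icc 1 k)
    {c : ℕ} (hc : c ∈ Set.Icc 1 k) : swapColor α β c ∈ Set.Icc 1 k := by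
  unfold swapColor; split_ifs <;> assumption

theorem swapColor_of_ne {α β c : ℕ} (h1 : c ≠ α) (h2 : c ≠ β) : swapColor α β c = c := by
  unfold swapColor; rw [if_neg h1, if_neg h2]

theorem swapColor_left (α β : ℕ) : swapColor α β α = β := by unfold swapColor; simp

theorem swapColor_right (α β : ℕ) : swapColor α β β = α := by
  unfold swapColor; split_ifs <;> omega

open Classical in
/-- The color function after the Kempe change on the `(α, β)`-chain through `z`. -/
noncomputable def kempeFun {H : SimpleGraph V} {k : ℕ} (φ : EdgeColoring H k) (α β : ℕ)
    (z : V) : Sym2 V → ℕ := fun e =>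
  if (φ.color e = α ∨ φ.color e = β) ∧ ∃ v ∈ e, (chainGraph φ α β).Reachable z v
    then swapColor α β (φ.color e) else φ.color e

theorem kempeFun_of_reach {H : SimpleGraph V} {k : ℕ} (φ : EdgeColoring H k) (α β : ℕ)
    {z u : V} (hu : (chainGraph φ α β).Reachable z u) (x : V) :
    kempeFun φ α β z s(u, x) = swapColor α β (φ.color s(u, x)) := by
  unfold kempeFun
  split_ifs with h
  · rfl
  · rcases Classical.em (φ.color s(u, x) = α ∨ φ.color s(u, x) = β) with hc | hc
    · exact absurd ⟨hc, ⟨u, Sym2.mem_mk_left u x, hu⟩⟩ h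
    · push_neg at hc
      rw [swapColor_of_ne hc.1 hc.2]

theorem kempeFun_of_not_reach {H : SimpleGraph V} {k : ℕ} (φ : EdgeColoring H k) {α β : ℕ}
    {z u x : V} (hadj : H.Adj u x) (hu : ¬ (chainGraph φ α β).Reachable z u) :
    kempeFun φ α β z s(u, x) = φ.color s(u, x) := by
  unfold kempeFun
  split_ifs with h
  · exfalso
    obtain ⟨hc, v, hv, hr⟩ := h
    rcases Sym2.mem_iff.mp hv with rfl | rfl
    · exact hu hr
    · refine hu (hr.trans (SimpleGraph.Adj.reachable ?_))
      exact ⟨hadj.symm, by rwa [Sym2.eq_swap]⟩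
  · rfl

/-- The Kempe change of `φ` on the `(α, β)`-chain containing `z`. -/
noncomputable def EdgeColoring.kempeSwap {H : SimpleGraph V} {k : ℕ} (φ : EdgeColoring H k)
    {α β : ℕ} (hα : α ∈ Set.Icc 1 k) (hβ : β ∈ Set.Icc 1 k) (z : V) : EdgeColoring H k where
  color := kempeFun φ α β z
  mem_Icc e he := by
    unfold kempeFun
    split_ifs with h
    · exact swapColor_mem_Icc hα hβ (φ.mem_Icc e he)
    · exact φ.mem_Icc e he
  proper u v w huv huw hvw := by
    by_cases hu : (chainGraph φ α β).Reachable z u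
    · rw [kempeFun_of_reach φ α β hu v, kempeFun_of_reach φ α β hu w]
      intro hEq
      apply φ.proper u v w huv huw hvw
      have := congrArg (swapColor α β) hEq
      rwa [swapColor_swapColor, swapColor_swapColor] at this
    · rw [kempeFun_of_not_reach φ huv hu, kempeFun_of_not_reach φ huw hu]
      exact φ.proper u v w huv huw hvw

theorem kempeSwap_color_of_not_reach {H : SimpleGraph V} {k : ℕ} (φ : EdgeColoring H k)
    {α β : ℕ} (hα : α ∈ Set.Icc 1 k) (hβ : β ∈ Set.Icc 1 k) {z u x : V} (hadj : H.Adj u x)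
    (hu : ¬ (chainGraph φ α β).Reachable z u) :
    (φ.kempeSwap hα hβ z).color s(u, x) = φ.color s(u, x) :=
  kempeFun_of_not_reach φ hadj hu

theorem kempeSwap_missing_of_not_reach {H : SimpleGraph V} {k : ℕ} (φ : EdgeColoring H k)
    {α β : ℕ} (hα : α ∈ Set.Icc 1 k) (hβ : β ∈ Set.Icc 1 k) {z v : V}
    (hv : ¬ (chainGraph φ α β).Reachable z v) :
    (φ.kempeSwap hα hβ z).missing v = φ.missing v := by
  ext c
  simp only [EdgeColoring.mem_missing_iff]
  constructor <;> rintro ⟨h1, h2⟩ <;> refine ⟨h1, fun u hu => ?_⟩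
  · have := h2 u hu
    rwa [kempeSwap_color_of_not_reach φ hα hβ hu hv] at this
  · rw [kempeSwap_color_of_not_reach φ hα hβ hu hv]
    exact h2 u hu

theorem kempeSwap_missing_of_reach {H : SimpleGraph V} {k : ℕ} (φ : EdgeColoring H k)
    {α β : ℕ} (hα : α ∈ Set.Icc 1 k) (hβ : β ∈ Set.Icc 1 k) {z v : V}
    (hv : (chainGraph φ α β).Reachable z v) (c : ℕ) :
    c ∈ (φ.kempeSwap hα hβ z).missing v ↔ swapColor α β c ∈ φ.missing v := by
  simp only [EdgeColoring.mem_missing_iff]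
  constructor
  · rintro ⟨h1, h2⟩
    refine ⟨swapColor_mem_Icc hα hβ h1, fun u hu hEq => h2 u hu ?_⟩
    show kempeFun φ α β z s(v, u) = c
    rw [kempeFun_of_reach φ α β hv u, hEq, swapColor_swapColor]
  · rintro ⟨h1, h2⟩
    constructor
    · have := swapColor_mem_Icc hα hβ h1
      rwa [swapColor_swapColor] at this
    · intro u hu hEq
      apply h2 u hu
      have : swapColor α β (φ.color s(v, u)) = c := by
        rw [← kempeFun_of_reach φ α β hv u]
        exact hEq
      rw [← this, swapColor_swapColor]

theorem delAdj {G : SimpleGraph V} {e : Sym2 V} {u v : V} :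
    (G.deleteEdges {e}).Adj u v ↔ G.Adj u v ∧ s(u, v) ≠ e := by
  rw [SimpleGraph.deleteEdges_adj, Set.mem_singleton_iff]

section Aux2

variable [Fintype V] [DecidableEq V] {G : SimpleGraph V} [DecidableRel G.Adj] {r : V}

/-- If a color is missing at both ends of the uncolored edge, `G` is not class 2. -/
theorem no_common_missing (hC : Class2 G) {z : V} (hz : G.Adj r z)
    (ψ : EdgeColoring (G.deleteEdges {s(r, z)}) G.maxDegree) {c : ℕ}
    (h1 : c ∈ ψ.missing r) (h2 : c ∈ ψ.missing z) : False := by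
  classical
  have hrz : r ≠ z := G.ne_of_adj hz
  apply hC.false
  refine ⟨fun e => if e = s(r, z) then c else ψ.color e, ?_, ?_⟩
  · intro e he
    show (if e = s(r, z) then c else ψ.color e) ∈ Set.Icc 1 G.maxDegree
    split_ifs with h
    · exact h1.1
    · exact ψ.mem_Icc e (by rw [SimpleGraph.edgeSet_deleteEdges]; exact ⟨he, h⟩)
  · intro u v w huv huw hvw
    by_cases e1 : s(u, v) = s(r, z) <;> by_cases e2 : s(u, w) = s(r, z)
    · exact absurd (Sym2.congr_right.mp (e1.trans e2.symm)) hvw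
    · simp only [if_pos e1, if_neg e2]
      intro hEq
      rcases Sym2.eq_iff.mp e1 with ⟨hu, hv⟩ | ⟨hu, hv⟩
      · have hG : G.Adj r w := hu ▸ huw
        have hwz : w ≠ z := fun h => hvw (hv.trans h.symm)
        rw [hu] at hEq
        exact h1.2 w (delAdj.mpr ⟨hG, fun h => hwz (Sym2.congr_right.mp h)⟩) hEq.symm
      · have hG : G.Adj z w := hu ▸ huw
        have hwr : w ≠ r := fun h => hvw (hv.trans h.symm)
        rw [hu] at hEq
        refine h2.2 w (delAdj.mpr ⟨hG, fun h => ?_⟩) hEq.symm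
        rcases Sym2.eq_iff.mp h with ⟨h', -⟩ | ⟨-, h'⟩
        · exact hrz h'.symm
        · exact hwr h'
    · simp only [if_neg e1, if_pos e2]
      intro hEq
      rcases Sym2.eq_iff.mp e2 with ⟨hu, hw⟩ | ⟨hu, hw⟩
      · have hG : G.Adj r v := hu ▸ huv
        have hvz : v ≠ z := fun h => hvw (h.trans hw.symm)
        rw [hu] at hEq
        exact h1.2 v (delAdj.mpr ⟨hG, fun h => hvz (Sym2.congr_right.mp h)⟩) hEq
      · have hG : G.Adj z v := hu ▸ huv
        have hvr : v ≠ r := fun h => hvw (h.trans hw.symm)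
        rw [hu] at hEq
        refine h2.2 v (delAdj.mpr ⟨hG, fun h => ?_⟩) hEq
        rcases Sym2.eq_iff.mp h with ⟨h', -⟩ | ⟨-, h'⟩
        · exact hrz h'.symm
        · exact hvr h'
    · simp only [if_neg e1, if_neg e2]
      exact ψ.proper u v w (delAdj.mpr ⟨huv, e1⟩) (delAdj.mpr ⟨huw, e2⟩) hvw

/-- Some color is missing at `r` in any `Δ`-coloring of `G` minus an edge at `r`. -/
theorem exists_missing_r {x : V} (hx : G.Adj r x)
    (φ : EdgeColoring (G.deleteEdges {s(r, x)}) G.maxDegree) :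
    ∃ β, β ∈ φ.missing r := by
  classical
  have hdeg : G.degree r ≤ G.maxDegree := G.degree_le_maxDegree r
  have hpos : 0 < G.degree r := (G.degree_pos_iff_exists_adj r).mpr ⟨x, hx⟩
  set N : Finset V := (G.neighborFinset r).erase x with hN
  have hcard : N.card = G.degree r - 1 := by
    rw [hN, Finset.card_erase_of_mem (by rwa [SimpleGraph.mem_neighborFinset])]
    rfl
  have hlt : (N.image fun u => φ.color s(r, u)).card < (Finset.Icc 1 G.maxDegree).card := by
    calc (N.image fun u => φ.color s(r, u)).card ≤ N.card := Finset.card_image_le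
    _ < G.maxDegree := by rw [hcard]; omega
    _ = (Finset.Icc 1 G.maxDegree).card := by rw [Nat.card_Icc]; omega
  have hns : ¬ Finset.Icc 1 G.maxDegree ⊆ N.image fun u => φ.color s(r, u) :=
    fun h => absurd (Finset.card_le_card h) (not_le.mpr hlt)
  obtain ⟨β, hβ1, hβ2⟩ := Finset.not_subset.mp hns
  refine ⟨β, ⟨by simpa using hβ1, fun u hu hEq => hβ2 ?_⟩⟩
  replace hu := delAdj.mp hu
  refine Finset.mem_image.mpr ⟨u, ?_, hEq⟩
  rw [hN]
  refine Finset.mem_erase.mpr ⟨fun h => hu.2 (by rw [h]), ?_⟩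
  exact (SimpleGraph.mem_neighborFinset G r u).mpr hu.1

/-- One step of shifting the fan: move the uncolored edge from `rx` to `ry`. -/
theorem shiftStep {x y : V} (hx : G.Adj r x) (hy : G.Adj r y) (hxy : x ≠ y) {k : ℕ}
    (φ : EdgeColoring (G.deleteEdges {s(r, x)}) k)
    (hc : φ.color s(r, y) ∈ φ.missing x) :
    ∃ ψ : EdgeColoring (G.deleteEdges {s(r, y)}) k,
      (∀ u : V, u ≠ x → ψ.color s(r, u) = φ.color s(r, u)) ∧
      ψ.missing r = φ.missing r ∧
      φ.missing y ⊆ ψ.missing y ∧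
      ∀ v : V, v ≠ r → v ≠ x → v ≠ y → ψ.missing v = φ.missing v := by
  classical
  have hrx : r ≠ x := G.ne_of_adj hx
  have hry : r ≠ y := G.ne_of_adj hy
  have hxadj : (G.deleteEdges {s(r, x)}).Adj r y :=
    delAdj.mpr ⟨hy, fun h => hxy (Sym2.congr_right.mp h).symm⟩
  refine ⟨⟨fun e => if e = s(r, x) then φ.color s(r, y) else φ.color e, ?_, ?_⟩,
    ?_, ?_, ?_, ?_⟩
  · intro e he
    rw [SimpleGraph.edgeSet_deleteEdges] at he
    show (if e = s(r, x) then φ.color s(r, y) else φ.color e) ∈ Set.Icc 1 k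
    split_ifs with h
    · exact hc.1
    · exact φ.mem_Icc e (by
        rw [SimpleGraph.edgeSet_deleteEdges]
        exact ⟨he.1, by simpa using h⟩)
  · intro u v w huv huw hvw
    replace huv := delAdj.mp huv
    replace huw := delAdj.mp huw
    by_cases e1 : s(u, v) = s(r, x) <;> by_cases e2 : s(u, w) = s(r, x)
    · exact absurd (Sym2.congr_right.mp (e1.trans e2.symm)) hvw
    · simp only [if_pos e1, if_neg e2]
      intro hEq
      rcases Sym2.eq_iff.mp e1 with ⟨hu, hv⟩ | ⟨hu, hv⟩
      · have hG : G.Adj r w := hu ▸ huw.1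
        have hwx : w ≠ x := fun h => hvw (hv.trans h.symm)
        have hwy : w ≠ y := fun h => huw.2 (by rw [hu, h])
        rw [hu] at hEq
        exact φ.proper r y w hxadj (delAdj.mpr ⟨hG, fun h => hwx (Sym2.congr_right.mp h)⟩)
          (fun h => hwy h.symm) hEq
      · have hG : G.Adj x w := hu ▸ huw.1
        have hwr : w ≠ r := fun h => hvw (hv.trans h.symm)
        rw [hu] at hEq
        refine hc.2 w (delAdj.mpr ⟨hG, fun h => ?_⟩) hEq.symm
        rcases Sym2.eq_iff.mp h with ⟨h', -⟩ | ⟨-, h'⟩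
        · exact hrx h'.symm
        · exact hwr h'
    · simp only [if_neg e1, if_pos e2]
      intro hEq
      rcases Sym2.eq_iff.mp e2 with ⟨hu, hw⟩ | ⟨hu, hw⟩
      · have hG : G.Adj r v := hu ▸ huv.1
        have hvx : v ≠ x := fun h => hvw (h.trans hw.symm)
        have hvy : v ≠ y := fun h => huv.2 (by rw [hu, h])
        rw [hu] at hEq
        exact φ.proper r v y (delAdj.mpr ⟨hG, fun h => hvx (Sym2.congr_right.mp h)⟩) hxadj
          hvy hEq
      · have hG : G.Adj x v := hu ▸ huv.1
        have hvr : v ≠ r := fun h => hvw (h.trans hw.symm)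
        rw [hu] at hEq
        refine hc.2 v (delAdj.mpr ⟨hG, fun h => ?_⟩) hEq
        rcases Sym2.eq_iff.mp h with ⟨h', -⟩ | ⟨-, h'⟩
        · exact hrx h'.symm
        · exact hvr h'
    · simp only [if_neg e1, if_neg e2]
      exact φ.proper u v w (delAdj.mpr ⟨huv.1, e1⟩) (delAdj.mpr ⟨huw.1, e2⟩) hvw
  · -- colors at r away from x unchanged
    intro u hux
    show (if s(r, u) = s(r, x) then φ.color s(r, y) else φ.color s(r, u)) = φ.color s(r, u)
    rw [if_neg (fun h => hux (Sym2.congr_right.mp h))]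
  · -- missing at r unchanged
    ext d
    constructor
    · rintro ⟨hd1, hd2⟩
      refine ⟨hd1, fun u hu => ?_⟩
      replace hu := delAdj.mp hu
      by_cases huy : u = y
      · rw [huy]
        have := hd2 x (delAdj.mpr ⟨hx, fun h => hxy (Sym2.congr_right.mp h)⟩)
        dsimp only at this
        rwa [if_pos rfl] at this
      · have hux : u ≠ x := fun h => hu.2 (by rw [h])
        have := hd2 u (delAdj.mpr ⟨hu.1, fun h => huy (Sym2.congr_right.mp h)⟩)
        dsimp only at this
        rwa [if_neg (fun h => hux (Sym2.congr_right.mp h))] at this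
    · rintro ⟨hd1, hd2⟩
      refine ⟨hd1, fun u hu => ?_⟩
      replace hu := delAdj.mp hu
      show (if s(r, u) = s(r, x) then φ.color s(r, y) else φ.color s(r, u)) ≠ d
      by_cases hux : u = x
      · rw [if_pos (by rw [hux])]
        exact hd2 y hxadj
      · rw [if_neg (fun h => hux (Sym2.congr_right.mp h))]
        exact hd2 u (delAdj.mpr ⟨hu.1, fun h => hux (Sym2.congr_right.mp h)⟩)
  · -- missing at y grows
    intro d hd
    refine ⟨hd.1, fun u hu => ?_⟩
    replace hu := delAdj.mp hu
    have hne : s(y, u) ≠ s(r, x) := by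
      intro h
      rcases Sym2.eq_iff.mp h with ⟨h', -⟩ | ⟨h', -⟩
      · exact hry h'.symm
      · exact hxy h'.symm
    show (if s(y, u) = s(r, x) then φ.color s(r, y) else φ.color s(y, u)) ≠ d
    rw [if_neg hne]
    exact hd.2 u (delAdj.mpr ⟨hu.1, hne⟩)
  · -- missing elsewhere unchanged
    intro v hvr hvx hvy
    have hkey : ∀ u : V, s(v, u) ≠ s(r, x) := by
      intro u h
      rcases Sym2.eq_iff.mp h with ⟨h', -⟩ | ⟨h', -⟩
      · exact hvr h'
      · exact hvx h'
    have hkey2 : ∀ u : V, s(v, u) ≠ s(r, y) := by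
      intro u h
      rcases Sym2.eq_iff.mp h with ⟨h', -⟩ | ⟨h', -⟩
      · exact hvr h'
      · exact hvy h'
    ext d
    constructor
    · rintro ⟨hd1, hd2⟩
      refine ⟨hd1, fun u hu => ?_⟩
      replace hu := delAdj.mp hu
      have := hd2 u (delAdj.mpr ⟨hu.1, hkey2 u⟩)
      dsimp only at this
      rwa [if_neg (hkey u)] at this
    · rintro ⟨hd1, hd2⟩
      refine ⟨hd1, fun u hu => ?_⟩
      replace hu := delAdj.mp hu
      show (if s(v, u) = s(r, x) then φ.color s(r, y) else φ.color s(v, u)) ≠ d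
      rw [if_neg (hkey u)]
      exact hd2 u (delAdj.mpr ⟨hu.1, hkey u⟩)

end Aux2

theorem chain_and' {γ : Type*} {R S : γ → γ → Prop} :
    ∀ {a : γ} {l : List γ}, List.Chain R a l → List.Chain S a l →
      List.Chain (fun x y => R x y ∧ S x y) a l := by
  intro a l h1 h2
  induction l generalizing a with
  | nil => exact List.Chain.nil
  | cons b l ih =>
    simp only [List.Chain, List.isChain_cons_cons] at h1 h2 ⊢
    exact ⟨⟨h1.1, h2.1⟩, ih h1.2 h2.2⟩

theorem chain_mono' {γ : Type*} {R S : γ → γ → Prop} :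
    ∀ (a : γ) (l : List γ), List.Chain R a l →
      (∀ u ∈ a :: l, ∀ v ∈ l, R u v → S u v) → List.Chain S a l := by
  intro a l
  induction l generalizing a with
  | nil => intro _ _; exact List.Chain.nil
  | cons b l ih =>
    intro h H
    simp only [List.Chain, List.isChain_cons_cons] at h ⊢
    refine ⟨H a (by simp) b (by simp) h.1, ih b h.2 ?_⟩
    intro u hu v hv hr
    exact H u (List.mem_cons_of_mem _ hu) v (List.mem_cons_of_mem _ hv) hr

section Aux3

variable [Fintype V] [DecidableEq V] {G : SimpleGraph V} [DecidableRel G.Adj] {r : V}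

set_option linter.unusedSectionVars false

/-- Shift the uncolored edge along a fan chain. -/
theorem shiftChain {k : ℕ} (l : List V) :
    ∀ (x : V) (φ : EdgeColoring (G.deleteEdges {s(r, x)}) k), G.Adj r x →
      (∀ v ∈ l, G.Adj r v) → (x :: l).Nodup →
      List.Chain (fun u v => φ.color s(r, v) ∈ φ.missing u) x l →
      ∀ z : V, (x :: l).getLast (List.cons_ne_nil x l) = z →
      ∃ ψ : EdgeColoring (G.deleteEdges {s(r, z)}) k,
        ψ.missing r = φ.missing r ∧ φ.missing z ⊆ ψ.missing z := by
  induction l with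
  | nil =>
    intro x φ hx _ _ _ z hz
    rw [List.getLast_singleton] at hz
    subst hz
    exact ⟨φ, rfl, fun _ h => h⟩
  | cons y l ih =>
    intro x φ hx hadjl hnd hch z hz
    simp only [List.Chain, List.isChain_cons_cons] at hch
    obtain ⟨hcy, hch⟩ := hch
    have hy : G.Adj r y := hadjl y (List.mem_cons_self (a := y) (l := l))
    have hxtl : x ∉ y :: l := (List.nodup_cons.mp hnd).1
    have hxy : x ≠ y := fun h => hxtl (h ▸ List.mem_cons_self (a := y) (l := l))
    obtain ⟨ψ₁, hcol, hmr, hmy, hmv⟩ := shiftStep hx hy hxy φ hcy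
    have hytl : y ∉ l := (List.nodup_cons.mp (List.nodup_cons.mp hnd).2).1
    have hch₂ : List.Chain (fun u v => ψ₁.color s(r, v) ∈ ψ₁.missing u) y l := by
      refine chain_mono' y l hch ?_
      intro u hu v hv hr
      have hvx : v ≠ x := fun h => hxtl (h ▸ List.mem_cons_of_mem _ hv)
      rw [hcol v hvx]
      rcases List.mem_cons.mp hu with rfl | hu'
      · exact hmy hr
      · have hur : u ≠ r := (G.ne_of_adj (hadjl u (List.mem_cons_of_mem _ hu'))).symm
        have hux : u ≠ x := fun h => hxtl (h ▸ List.mem_cons_of_mem _ hu')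
        have huy : u ≠ y := fun h => hytl (h ▸ hu')
        rw [hmv u hur hux huy]
        exact hr
    have hz' : (y :: l).getLast (List.cons_ne_nil y l) = z := by
      rw [← hz, List.getLast_cons (List.cons_ne_nil y l)]
    obtain ⟨ψ, h1, h2⟩ := ih y ψ₁ hy (fun v hv => hadjl v (List.mem_cons_of_mem _ hv))
      (List.nodup_cons.mp hnd).2 hch₂ z hz'
    refine ⟨ψ, h1.trans hmr, subset_trans ?_ h2⟩
    rcases l with _ | ⟨w, l'⟩
    · have hyz : y = z := by simpa using hz'
      rw [← hyz]
      exact hmy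
    · have hzmem : z ∈ w :: l' := by
        rw [← hz', List.getLast_cons (List.cons_ne_nil w l')]
        exact List.getLast_mem (List.cons_ne_nil w l')
      have hzr : z ≠ r := (G.ne_of_adj (hadjl z (List.mem_cons_of_mem _ hzmem))).symm
      have hzx : z ≠ x := fun h => hxtl (h ▸ List.mem_cons_of_mem _ hzmem)
      have hzy : z ≠ y := fun h => hytl (h ▸ hzmem)
      rw [hmv z hzr hzx hzy]

/-- Every fan vertex is reachable from `s 1` by a decreasing witness chain. -/
theorem witness_chain {k p : ℕ} {H : SimpleGraph V} {s : ℕ → V} (φ : EdgeColoring H k)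
    (hF : IsMultifanAt φ G r s p) :
    ∀ j, j ∈ Set.Icc 1 p → ∃ l : List ℕ,
      (∀ m ∈ l, m ∈ Set.Icc 1 p) ∧ List.Chain (· > ·) j l ∧
      (j :: l).getLast (List.cons_ne_nil j l) = 1 ∧
      List.Chain (fun a b => φ.color s(r, s a) ∈ φ.missing (s b)) j l := by
  intro j
  induction j using Nat.strong_induction_on with
  | _ j IH =>
    intro hj
    obtain ⟨hj1, hjp⟩ := hj
    by_cases hje : j = 1
    · subst hje
      exact ⟨[], by simp, List.Chain.nil, List.getLast_singleton _, List.Chain.nil⟩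
    · obtain ⟨m, hm, hcol⟩ := hF.2.2.2 j ⟨by omega, hjp⟩
      obtain ⟨hm1, hm2⟩ := hm
      have hmIcc : m ∈ Set.Icc 1 p := ⟨hm1, by omega⟩
      obtain ⟨l, hmem, hgt, hlast, hcol'⟩ := IH m (by omega) hmIcc
      refine ⟨m :: l, ?_, List.Chain.cons (by omega) hgt, ?_, List.Chain.cons hcol hcol'⟩
      · intro a ha
        rcases List.mem_cons.mp ha with rfl | ha'
        · exact hmIcc
        · exact hmem a ha'
      · rw [List.getLast_cons (List.cons_ne_nil m l)]
        exact hlast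

/-- Shift the uncolored edge `r(s 1)` to `r(s j)` along a decreasing witness chain. -/
theorem shiftAlongIndexChain {k p : ℕ} {s : ℕ → V}
    (hinj : Set.InjOn s (Set.Icc 1 p)) (hadjs : ∀ m ∈ Set.Icc 1 p, G.Adj r (s m))
    (χ : EdgeColoring (G.deleteEdges {s(r, s 1)}) k)
    {j : ℕ} (hj : j ∈ Set.Icc 1 p) (l : List ℕ)
    (hmem : ∀ m ∈ l, m ∈ Set.Icc 1 p)
    (hgt : List.Chain (· > ·) j l)
    (hlast : (j :: l).getLast (List.cons_ne_nil j l) = 1)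
    (hcol : List.Chain (fun a b => χ.color s(r, s a) ∈ χ.missing (s b)) j l) :
    ∃ ψ : EdgeColoring (G.deleteEdges {s(r, s j)}) k,
      ψ.missing r = χ.missing r ∧ χ.missing (s j) ⊆ ψ.missing (s j) := by
  classical
  have hmem' : ∀ m ∈ j :: l, m ∈ Set.Icc 1 p := by
    intro m hm
    rcases List.mem_cons.mp hm with rfl | hm'
    · exact hj
    · exact hmem m hm'
  have hLmem : ∀ m ∈ (j :: l).reverse, m ∈ Set.Icc 1 p := fun m hm =>
    hmem' m (List.mem_reverse.mp hm)
  have hndL : ((j :: l).reverse).Nodup := by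
    rw [List.nodup_reverse]
    exact (List.isChain_iff_pairwise.mp hgt).imp (fun h => Nat.ne_of_gt h)
  have hhead : ((j :: l).reverse).head? = some 1 := by
    rw [List.head?_reverse, List.getLast?_eq_getLast (List.cons_ne_nil j l), hlast]
  obtain ⟨T, hT⟩ : ∃ T, (j :: l).reverse = 1 :: T := by
    rcases hL' : (j :: l).reverse with _ | ⟨a, T⟩
    · rw [hL'] at hhead; simp at hhead
    · rw [hL'] at hhead
      simp only [List.head?_cons, Option.some.injEq] at hhead
      exact ⟨T, by rw [hhead]⟩
  -- vertex list facts
  have hvnd : (s 1 :: T.map s).Nodup := by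
    have : ((j :: l).reverse.map s).Nodup := by
      refine List.Nodup.map_on ?_ hndL
      intro a ha b hb hab
      exact hinj (hLmem a ha) (hLmem b hb) hab
    rwa [hT, List.map_cons] at this
  have hvch : List.Chain (fun u v => χ.color s(r, v) ∈ χ.missing u) (s 1) (T.map s) := by
    have h1 : List.Chain' (fun u v => χ.color s(r, v) ∈ χ.missing u) ((j :: l).reverse.map s) := by
      simp only [List.Chain', List.isChain_map, List.isChain_reverse]
      exact hcol
    rw [hT, List.map_cons] at h1
    exact h1
  have hvlast : (s 1 :: T.map s).getLast (List.cons_ne_nil _ _) = s j := by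
    have h1 : (s 1 :: T.map s).getLast? = some (s j) := by
      rw [show (s 1 :: T.map s) = (j :: l).reverse.map s by rw [hT, List.map_cons],
        List.getLast?_map, List.getLast?_eq_head?_reverse, List.reverse_reverse]
      rfl
    rw [List.getLast?_eq_getLast (List.cons_ne_nil _ _)] at h1
    exact Option.some.injEq _ _ ▸ h1 |>.symm ▸ rfl
  obtain ⟨ψ, h1, h2⟩ := shiftChain (T.map s) (s 1) χ
    (hadjs 1 ⟨le_refl 1, hj.1.trans hj.2⟩)
    (fun v hv => by
      obtain ⟨a, ha, rfl⟩ := List.mem_map.mp hv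
      exact hadjs a (hLmem a (by rw [hT]; exact List.mem_cons_of_mem _ ha)))
    hvnd hvch (s j) hvlast
  exact ⟨ψ, h1, h2⟩

/-- Part 1 of elementarity: no color is missing at both `r` and a fan vertex. -/
theorem missing_r_fan_disjoint (hC : Class2 G) {s : ℕ → V} (hadj : G.Adj r (s 1)) {p : ℕ}
    (φ : EdgeColoring (G.deleteEdges {s(r, s 1)}) G.maxDegree)
    (hF : IsMultifanAt φ G r s p) {j : ℕ} (hj : j ∈ Set.Icc 1 p) {c : ℕ}
    (hcr : c ∈ φ.missing r) (hcj : c ∈ φ.missing (s j)) : False := by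
  obtain ⟨l, hmem, hgt, hlast, hcol⟩ := witness_chain φ hF j hj
  obtain ⟨ψ, h1, h2⟩ := shiftAlongIndexChain hF.2.2.1 (fun m hm => (hF.2.1 m hm).1) φ hj l
    hmem hgt hlast hcol
  exact no_common_missing hC ((hF.2.1 j hj).1) ψ (by rw [h1]; exact hcr) (h2 hcj)

end Aux3

section Aux4

variable {V : Type*}

set_option linter.unusedSectionVars false

/-- In a graph of max degree ≤ 2, three distinct vertices of degree ≤ 1 cannot be
pairwise connected. -/
theorem threeEnds : ∀ (n : ℕ) (C : SimpleGraph V) (x y z : V),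
    x ≠ y → x ≠ z → y ≠ z →
    (∀ v w₁ w₂ w₃ : V, C.Adj v w₁ → C.Adj v w₂ → C.Adj v w₃ → w₁ = w₂ ∨ w₁ = w₃ ∨ w₂ = w₃) →
    (∀ w₁ w₂ : V, C.Adj x w₁ → C.Adj x w₂ → w₁ = w₂) →
    (∀ w₁ w₂ : V, C.Adj y w₁ → C.Adj y w₂ → w₁ = w₂) →
    (∀ w₁ w₂ : V, C.Adj z w₁ → C.Adj z w₂ → w₁ = w₂) →
    ∀ (P : C.Walk x y) (Q : C.Walk x z), P.IsPath → Q.IsPath → P.length ≤ n → False := by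
  intro n
  induction n with
  | zero =>
    intro C x y z hxy _ _ _ _ _ _ P Q hP hQ hlen
    cases P with
    | nil => exact hxy rfl
    | cons h P' => simp at hlen
  | succ n ih =>
    intro C x y z hxy hxz hyz hdeg2 hdx hdy hdz P Q hP hQ hlen
    cases P with
    | nil => exact hxy rfl
    | @cons _ v _ hxv P' =>
      cases Q with
      | nil => exact hxz rfl
      | @cons _ v' _ hxv' Q' =>
        have hvv : v = v' := hdx v v' hxv hxv'
        subst hvv
        rw [SimpleGraph.Walk.cons_isPath_iff] at hP hQ
        by_cases hvy : v = y
        · subst hvy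
          cases Q' with
          | nil => exact hyz rfl
          | @cons _ u _ hyu Q'' =>
            have hxu : x = u := hdy x u hxv.symm hyu
            apply hQ.2
            rw [hxu, SimpleGraph.Walk.support_cons]
            exact List.mem_cons_of_mem _ Q''.start_mem_support
        · by_cases hvz : v = z
          · subst hvz
            cases P' with
            | nil => exact hyz rfl
            | @cons _ u _ hzu P'' =>
              have hxu : x = u := hdz x u hxv.symm hzu
              apply hP.2
              rw [hxu, SimpleGraph.Walk.support_cons]
              exact List.mem_cons_of_mem _ P''.start_mem_support
          · set C₂ : SimpleGraph V :=
              { Adj := fun a b => C.Adj a b ∧ a ≠ x ∧ b ≠ x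
                symm := ⟨fun a b h => ⟨h.1.symm, h.2.2, h.2.1⟩⟩
                loopless := ⟨fun a h => C.loopless.irrefl a h.1⟩ } with hC₂
            have hedges : ∀ {w₀ : V} (W : C.Walk v w₀), x ∉ W.support →
                ∀ e ∈ W.edges, e ∈ C₂.edgeSet := by
              intro w₀ W hW e he
              induction e using Sym2.ind with
              | _ a b =>
                refine ⟨W.adj_of_mem_edges he, fun h => hW ?_, fun h => hW ?_⟩
                · exact h ▸ W.fst_mem_support_of_mem_edges he
                · exact h ▸ W.snd_mem_support_of_mem_edges he
            have hP₂ := (P'.transfer C₂ (hedges P' hP.2)).length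
            refine ih C₂ v y z hvy hvz hyz ?_ ?_ ?_ ?_
              (P'.transfer C₂ (hedges P' hP.2)) (Q'.transfer C₂ (hedges Q' hQ.2))
              (hP.1.transfer _) (hQ.1.transfer _) ?_
            · intro a w₁ w₂ w₃ h1 h2 h3
              exact hdeg2 a w₁ w₂ w₃ h1.1 h2.1 h3.1
            · intro w₁ w₂ h1 h2
              rcases hdeg2 v w₁ w₂ x h1.1 h2.1 hxv.symm with h | h | h
              · exact h
              · exact absurd h h1.2.2
              · exact absurd h h2.2.2
            · intro w₁ w₂ h1 h2
              exact hdy w₁ w₂ h1.1 h2.1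
            · intro w₁ w₂ h1 h2
              exact hdz w₁ w₂ h1.1 h2.1
            · rw [SimpleGraph.Walk.length_transfer]
              rw [SimpleGraph.Walk.length_cons] at hlen
              omega

theorem chainGraph_key {H : SimpleGraph V} {k : ℕ} (φ : EdgeColoring H k) {α β : ℕ}
    {v w₁ w₂ : V} (h1 : (chainGraph φ α β).Adj v w₁) (h2 : (chainGraph φ α β).Adj v w₂)
    (hcc : φ.color s(v, w₁) = φ.color s(v, w₂)) : w₁ = w₂ := by
  by_contra hne
  exact φ.proper v w₁ w₂ h1.1 h2.1 hne hcc

theorem chainGraph_deg2 {H : SimpleGraph V} {k : ℕ} (φ : EdgeColoring H k) {α β : ℕ} :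
    ∀ v w₁ w₂ w₃ : V, (chainGraph φ α β).Adj v w₁ → (chainGraph φ α β).Adj v w₂ →
      (chainGraph φ α β).Adj v w₃ → w₁ = w₂ ∨ w₁ = w₃ ∨ w₂ = w₃ := by
  intro v w₁ w₂ w₃ h1 h2 h3
  by_cases h12 : φ.color s(v, w₁) = φ.color s(v, w₂)
  · exact Or.inl (chainGraph_key φ h1 h2 h12)
  by_cases h13 : φ.color s(v, w₁) = φ.color s(v, w₃)
  · exact Or.inr (Or.inl (chainGraph_key φ h1 h3 h13))
  refine Or.inr (Or.inr (chainGraph_key φ h2 h3 ?_))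
  rcases h1.2 with e1 | e1 <;> rcases h2.2 with e2 | e2 <;> rcases h3.2 with e3 | e3 <;> omega

theorem chainGraph_end {H : SimpleGraph V} {k : ℕ} (φ : EdgeColoring H k) {α β γ : ℕ}
    {v : V} (hγ : γ = α ∨ γ = β) (hmiss : γ ∈ φ.missing v) :
    ∀ w₁ w₂ : V, (chainGraph φ α β).Adj v w₁ → (chainGraph φ α β).Adj v w₂ → w₁ = w₂ := by
  intro w₁ w₂ h1 h2
  apply chainGraph_key φ h1 h2
  have n1 : φ.color s(v, w₁) ≠ γ := hmiss.2 w₁ h1.1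
  have n2 : φ.color s(v, w₂) ≠ γ := hmiss.2 w₂ h2.1
  rcases h1.2 with e1 | e1 <;> rcases h2.2 with e2 | e2 <;> rcases hγ with rfl | rfl <;> omega

theorem multifan_mono {G : SimpleGraph V} {r : V} {s : ℕ → V} {H : SimpleGraph V} {k p q : ℕ}
    {φ : EdgeColoring H k} (hF : IsMultifanAt φ G r s p) (hq1 : 1 ≤ q) (hqp : q ≤ p) :
    IsMultifanAt φ G r s q := by
  refine ⟨hq1, fun i hi => hF.2.1 i ⟨hi.1, hi.2.trans hqp⟩,
    hF.2.2.1.mono (Set.Icc_subset_Icc_right hqp), fun i hi => ?_⟩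
  exact hF.2.2.2 i ⟨hi.1, hi.2.trans hqp⟩

end Aux4

section Aux5

variable [Fintype V] [DecidableEq V] {G : SimpleGraph V} [DecidableRel G.Adj] {r : V}

set_option linter.unusedSectionVars false

/-- Part 2 of elementarity: no color is missing at two distinct fan vertices. -/
theorem fan_missing_disjoint (hC : Class2 G) {s : ℕ → V} (hadj : G.Adj r (s 1)) :
    ∀ p (φ : EdgeColoring (G.deleteEdges {s(r, s 1)}) G.maxDegree),
      IsMultifanAt φ G r s p →
      ∀ k, k ∈ Set.Icc 1 p → ∀ m, m ∈ Set.Icc 1 p → m < k → ∀ α,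
        α ∈ φ.missing (s k) → α ∈ φ.missing (s m) → False := by
  intro p
  induction p using Nat.strong_induction_on with
  | _ p IH =>
    intro φ hF k hk m hm hmk α hαk hαm
    obtain ⟨hk1, hkp⟩ := hk
    obtain ⟨hm1, hmp⟩ := hm
    by_cases hkp' : k ≤ p - 1
    · exact IH (p - 1) (by omega) φ (multifan_mono hF (by omega) (by omega)) k
        ⟨hk1, hkp'⟩ m ⟨hm1, by omega⟩ hmk α hαk hαm
    · have hkp2 : k = p := by omega
      subst hkp2
      have hp2 : 2 ≤ k := by omega
      have hFm : IsMultifanAt φ G r s (k - 1) := multifan_mono hF (by omega) (by omega)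
      have huniq : ∀ v, v ∈ Set.Icc 1 (k - 1) → α ∈ φ.missing (s v) → v = m := by
        intro v hv hαv
        by_contra hne
        rcases Nat.lt_or_ge v m with h | h
        · exact IH (k - 1) (by omega) φ hFm m ⟨hm1, by omega⟩ v hv h α hαm hαv
        · exact IH (k - 1) (by omega) φ hFm v hv m ⟨hm1, by omega⟩ (by omega) α hαv hαm
      obtain ⟨β, hβr⟩ := exists_missing_r hadj φ
      have hαIcc : α ∈ Set.Icc 1 G.maxDegree := hαk.1
      have hβIcc : β ∈ Set.Icc 1 G.maxDegree := hβr.1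
      have hα_not_r : α ∉ φ.missing r :=
        fun h => missing_r_fan_disjoint hC hadj φ hF ⟨hk1, le_refl k⟩ h hαk
      have hβ_not_k : β ∉ φ.missing (s k) :=
        fun h => missing_r_fan_disjoint hC hadj φ hF ⟨hk1, le_refl k⟩ hβr h
      have hβ_not_m : β ∉ φ.missing (s m) :=
        fun h => missing_r_fan_disjoint hC hadj φ hF ⟨hm1, by omega⟩ hβr h
      have hβedge : ∀ u : V, (G.deleteEdges {s(r, s 1)}).Adj r u → φ.color s(r, u) ≠ β :=
        hβr.2
      -- the swap-shift finisher
      have finisher : ∀ t, t ∈ Set.Icc 1 k → α ∈ φ.missing (s t) →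
          ¬ (chainGraph φ α β).Reachable (s t) r →
          (∀ v, v ∈ Set.Icc 1 (k - 1) → v < t →
            (chainGraph φ α β).Reachable (s t) (s v) → α ∉ φ.missing (s v)) →
          False := by
        intro t ht hαt hnr hsafe
        obtain ⟨l, hmem, hgt, hlast, hcol⟩ := witness_chain φ hF t ht
        have hub : ∀ a ∈ l, a < t := by
          have hpw := List.isChain_iff_pairwise.mp hgt
          exact fun a ha => List.rel_of_pairwise_cons hpw ha
        set ψ' := φ.kempeSwap hαIcc hβIcc (s t) with hψ'
        have hcomb := chain_and' hgt hcol
        have hcol' : List.Chain (fun a b => ψ'.color s(r, s a) ∈ ψ'.missing (s b)) t l := by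
          refine chain_mono' t l hcomb ?_
          intro u hu v hv huv
          obtain ⟨hgtuv, hR⟩ := huv
          have hv' : v ∈ Set.Icc 1 k := hmem v hv
          have hu' : u ∈ Set.Icc 1 k := by
            rcases List.mem_cons.mp hu with rfl | hu''
            · exact ht.imp id (fun h => h.trans (by omega))
            · exact hmem u hu''
          have hu2 : 2 ≤ u := by
            obtain ⟨h1, _⟩ := hv'
            omega
          have hedge : (G.deleteEdges {s(r, s 1)}).Adj r (s u) := by
            refine delAdj.mpr ⟨(hF.2.1 u hu').1, fun h => ?_⟩
            have := hF.2.2.1 hu' ⟨le_refl 1, by omega⟩ (Sym2.congr_right.mp h)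
            omega
          have hcoleq : ψ'.color s(r, s u) = φ.color s(r, s u) :=
            kempeSwap_color_of_not_reach φ hαIcc hβIcc hedge hnr
          have hvt : v < t := hub v hv
          by_cases hre : (chainGraph φ α β).Reachable (s t) (s v)
          · have hnα : φ.color s(r, s u) ≠ α := by
              intro h
              have hvk : v ∈ Set.Icc 1 (k - 1) := ⟨hv'.1, by
                rcases List.mem_cons.mp hu with rfl | hu''
                · have := ht.2; omega
                · have := (hmem u hu'').2; omega⟩
              exact hsafe v hvk hvt hre (h ▸ hR)
            have hnβ : φ.color s(r, s u) ≠ β := hβedge (s u) hedge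
            rw [hcoleq]
            exact (kempeSwap_missing_of_reach φ hαIcc hβIcc hre _).mpr
              (by rw [swapColor_of_ne hnα hnβ]; exact hR)
          · rw [hcoleq, kempeSwap_missing_of_not_reach φ hαIcc hβIcc hre]
            exact hR
        have hβt : β ∈ ψ'.missing (s t) :=
          (kempeSwap_missing_of_reach φ hαIcc hβIcc (SimpleGraph.Reachable.refl _) β).mpr
            (by rw [swapColor_right]; exact hαt)
        have hmr : ψ'.missing r = φ.missing r :=
          kempeSwap_missing_of_not_reach φ hαIcc hβIcc hnr
        obtain ⟨ψ, h1, h2⟩ := shiftAlongIndexChain hF.2.2.1 (fun a ha => (hF.2.1 a ha).1) ψ'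
          ht l hmem hgt hlast hcol'
        exact no_common_missing hC (hF.2.1 t ht).1 ψ
          (by rw [h1, hmr]; exact hβr) (h2 hβt)
      -- main case analysis
      by_cases hrm : (chainGraph φ α β).Reachable (s m) r
      · -- r is on the chain of s m ; swap at s k instead
        have h3e : ¬ (chainGraph φ α β).Reachable r (s k) := by
          intro h
          have hW1 : (chainGraph φ α β).Reachable r (s m) := hrm.symm
          obtain ⟨W1⟩ := hW1
          obtain ⟨W2⟩ := h
          exact threeEnds W1.toPath.1.length (chainGraph φ α β) r (s m) (s k)
            (Ne.symm (hF.2.1 m ⟨hm1, by omega⟩).2) (Ne.symm (hF.2.1 k ⟨hk1, le_refl k⟩).2)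
            (fun hEq => (by omega : m ≠ k) (hF.2.2.1 ⟨hm1, by omega⟩ ⟨hk1, le_refl k⟩ hEq))
            (chainGraph_deg2 φ)
            (chainGraph_end φ (Or.inr rfl) hβr)
            (chainGraph_end φ (Or.inl rfl) hαm)
            (chainGraph_end φ (Or.inl rfl) hαk)
            W1.toPath.1 W2.toPath.1 W1.toPath.2 W2.toPath.2 (le_refl _)
        have hnr_k : ¬ (chainGraph φ α β).Reachable (s k) r := fun h => h3e h.symm
        have hnr_km : ¬ (chainGraph φ α β).Reachable (s k) (s m) := by
          intro h
          exact h3e (hrm.symm.trans h.symm)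
        refine finisher k ⟨hk1, le_refl k⟩ hαk hnr_k ?_
        intro v hv hvk hre hαv
        have := huniq v hv hαv
        subst this
        exact hnr_km hre
      · refine finisher m ⟨hm1, by omega⟩ hαm hrm ?_
        intro v hv hvm hre hαv
        have := huniq v hv hαv
        omega

end Aux5

theorem statement_9 [Fintype V] [DecidableEq V]
    (G : SimpleGraph V) [DecidableRel G.Adj] (hC : Class2 G)
    (r : V) (s : ℕ → V) (hadj : G.Adj r (s 1))
    (φ : EdgeColoring (G.deleteEdges {s(r, s 1)}) G.maxDegree)
    (p : ℕ) (hF : IsMultifanAt φ G r s p)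
    (i j : ℕ) (hi : i ∈ Set.Icc 1 p) (hj : j ∈ Set.Icc 1 p) (hij : i ≠ j)
    (δ lam : ℕ) (hδ : δ ∈ φ.missing (s i)) (hlam : lam ∈ φ.missing (s j))
    (a : ℕ) (ha : a ∈ φ.missing (s 1))
    (hδa : InducedBy φ r s p a δ) (hlama : InducedBy φ r s p a lam)
    (hprec : ColorPrec φ r s p a δ lam)
    (hunlinked : ¬(chainGraph φ δ lam).Reachable (s i) (s j)) :
    (chainGraph φ δ lam).Reachable (s j) r := by
  classical
  by_contra hgoal
  obtain ⟨hi1, hip⟩ := hi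
  obtain ⟨hj1, hjp⟩ := hj
  have ELφ := fan_missing_disjoint hC hadj p φ hF
  have huniq : ∀ c aa bb, aa ∈ Set.Icc 1 p → bb ∈ Set.Icc 1 p →
      c ∈ φ.missing (s aa) → c ∈ φ.missing (s bb) → aa = bb := by
    intro c aa bb haa hbb hca hcb
    by_contra hne
    rcases Nat.lt_or_ge aa bb with h | h
    · exact ELφ bb hbb aa haa h c hcb hca
    · exact ELφ aa haa bb hbb (by omega) c hca hcb
  have h_dl : δ ≠ lam := by
    intro h
    subst h
    exact hij (huniq δ i j ⟨hi1, hip⟩ ⟨hj1, hjp⟩ hδ hlam)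
  -- i < j from the precedence hypothesis
  have hij' : i < j := by
    rcases hprec with ⟨hδeq, l, hl, i', hi', hlam_x⟩ | ⟨l, hl, fi, fj, hij2, hδl, hlam_l⟩
    · have h1 : i = 1 := huniq δ i 1 ⟨hi1, hip⟩ ⟨le_refl 1, hF.1⟩ hδ (hδeq ▸ ha)
      omega
    · have hfi : l.get fi ∈ Set.Icc 2 p := hl.1 _ (List.get_mem l fi)
      have hfj : l.get fj ∈ Set.Icc 2 p := hl.1 _ (List.get_mem l fj)
      have h1 : l.get fi = i :=
        huniq δ (l.get fi) i ⟨by have := hfi.1; omega, hfi.2⟩ ⟨hi1, hip⟩ hδl hδ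
      have h2 : l.get fj = j :=
        huniq lam (l.get fj) j ⟨by have := hfj.1; omega, hfj.2⟩ ⟨hj1, hjp⟩ hlam_l hlam
      have hpw : List.Pairwise (· < ·) l := List.isChain_iff_pairwise.mp hl.2.1
      have := List.pairwise_iff_get.mp hpw fi fj hij2
      omega
  -- choose the truncation point q
  obtain ⟨q, hq1, hqp, hjq, hnolam⟩ : ∃ q, 1 ≤ q ∧ q ≤ p ∧ j ≤ q ∧
      ∀ k, k ∈ Set.Icc 2 q → φ.color s(r, s k) ≠ lam := by
    by_cases hex : ∃ k₀, k₀ ∈ Set.Icc 2 p ∧ φ.color s(r, s k₀) = lam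
    · obtain ⟨hk₀mem, hk₀col⟩ := Nat.find_spec hex
      set k₀ := Nat.find hex with hk₀
      obtain ⟨hk₀2, hk₀p⟩ := hk₀mem
      have hjk : j ≤ k₀ - 1 := by
        obtain ⟨w, hw, hwcol⟩ := hF.2.2.2 k₀ ⟨hk₀2, hk₀p⟩
        obtain ⟨hw1, hw2⟩ := hw
        have : w = j := huniq lam w j ⟨hw1, by omega⟩ ⟨hj1, hjp⟩ (hk₀col ▸ hwcol) hlam
        omega
      refine ⟨k₀ - 1, by omega, by omega, hjk, ?_⟩
      intro k hk hcol
      obtain ⟨hk2, hkq⟩ := hk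
      exact Nat.find_min hex (show k < k₀ by omega) ⟨⟨hk2, by omega⟩, hcol⟩
    · push_neg at hex
      exact ⟨p, hF.1, le_refl p, hjp, fun k hk => hex k hk⟩
  have hiq : i ≤ q := by omega
  have hδIcc : δ ∈ Set.Icc 1 G.maxDegree := hδ.1
  have hlamIcc : lam ∈ Set.Icc 1 G.maxDegree := hlam.1
  have hnr_i : ¬ (chainGraph φ δ lam).Reachable (s j) (s i) := fun h => hunlinked h.symm
  have hnr_r : ¬ (chainGraph φ δ lam).Reachable (s j) r := hgoal
  set φ' := φ.kempeSwap hδIcc hlamIcc (s j) with hφ'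
  have hF' : IsMultifanAt φ' G r s q := by
    refine ⟨hq1, fun i' hi' => hF.2.1 i' ⟨hi'.1, hi'.2.trans hqp⟩,
      hF.2.2.1.mono (Set.Icc_subset_Icc_right hqp), ?_⟩
    intro k hkq
    obtain ⟨hk2, hkq'⟩ := hkq
    obtain ⟨w, hw, hwcol⟩ := hF.2.2.2 k ⟨hk2, hkq'.trans hqp⟩
    obtain ⟨hw1, hw2⟩ := hw
    refine ⟨w, ⟨hw1, hw2⟩, ?_⟩
    have hedge : (G.deleteEdges {s(r, s 1)}).Adj r (s k) := by
      refine delAdj.mpr ⟨(hF.2.1 k ⟨by omega, hkq'.trans hqp⟩).1, fun h => ?_⟩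
      have := hF.2.2.1 (⟨by omega, hkq'.trans hqp⟩ : k ∈ Set.Icc 1 p)
        ⟨le_refl 1, by omega⟩ (Sym2.congr_right.mp h)
      omega
    have hcoleq : φ'.color s(r, s k) = φ.color s(r, s k) :=
      kempeSwap_color_of_not_reach φ hδIcc hlamIcc hedge hnr_r
    rw [hcoleq]
    by_cases hre : (chainGraph φ δ lam).Reachable (s j) (s w)
    · have hn_lam : φ.color s(r, s k) ≠ lam := hnolam k ⟨hk2, hkq'⟩
      have hnδ : φ.color s(r, s k) ≠ δ := by
        intro h
        have : w = i := huniq δ w i ⟨hw1, by omega⟩ ⟨hi1, hip⟩ (h ▸ hwcol) hδ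
        exact hnr_i (this ▸ hre)
      exact (kempeSwap_missing_of_reach φ hδIcc hlamIcc hre _).mpr
        (by rw [swapColor_of_ne hnδ hn_lam]; exact hwcol)
    · rw [kempeSwap_missing_of_not_reach φ hδIcc hlamIcc hre]
      exact hwcol
  have ELφ' := fan_missing_disjoint hC hadj q φ' hF'
  have hδi' : δ ∈ φ'.missing (s i) := by
    rw [hφ', kempeSwap_missing_of_not_reach φ hδIcc hlamIcc hnr_i]
    exact hδ
  have hδj' : δ ∈ φ'.missing (s j) :=
    (kempeSwap_missing_of_reach φ hδIcc hlamIcc (SimpleGraph.Reachable.refl _) δ).mpr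
      (by rw [swapColor_left]; exact hlam)
  exact ELφ' j ⟨hj1, hjq⟩ i ⟨hi1, hiq⟩ hij' δ hδj' hδi'
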